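/- arXiv:0705.1828 — 2 statements merged into one kernel-verified Lean document; each statement's English description precedes it below -/
import Mathlib

section
/- Let $\lambda, c_7, c_8 > 0$, $p > 1$, and let $y : [0, \infty) \to [0,\infty)$ be differentiable and satisfy $y'(s) \geq c_7\big(y(s)^{(p+1)/2} - c_8 e^{\lambda s}\big)$ for all $s \geq 0$. If $c_8$ is large enough that $c_8^{(p+1)/2} \geq c_8(1 + 2\lambda/c_7) + 1$ and $2c_8 \geq 1$, then $y(s) \leq 2 c_8 e^{\lambda s}$ for all $s \geq 0$. -/
/-!
Suppose `y (s₀) > b (s₀)` for the barrier `b s = 2 c₈ e^{λ s}`. Whenever `y ≥ b`, the forcing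
`c₇ (y^α - c₈ e^{λ s})` with `α = (p + 1) / 2` exceeds the slope `b'`, thanks to the size condition
on `c₈`; so `y` can never return to the barrier and `y ≥ b ≥ 1` on `[s₀, ∞)`. There
`c₈ e^{λ s} ≤ y / 2 ≤ y^α / 2`, hence `y' ≥ (c₇ / 2) y^α`, and `y^(1 - α)` decreases at a rate
bounded below by `(α - 1) c₇ / 2` while staying positive, which is impossible on a half-line.
-/

open Set Real

theorem image_le_of_deriv_lt_deriv_boundary_Ici {f f' B B' : ℝ → ℝ} {a : ℝ}
    (hf : ∀ x ∈ Ici a, HasDerivWithinAt f (f' x) (Ici a) x)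
    (hB : ∀ x ∈ Ici a, HasDerivWithinAt B (B' x) (Ici a) x)
    (ha : f a ≤ B a) (bound : ∀ x ∈ Ici a, f x = B x → f' x < B' x) :
    ∀ x ∈ Ici a, f x ≤ B x := by
  intro x hx
  have cont : ∀ {g g' : ℝ → ℝ}, (∀ x ∈ Ici a, HasDerivWithinAt g (g' x) (Ici a) x) →
      ContinuousOn g (Icc a x) := fun hg t ht =>
    (hg t ht.1).continuousWithinAt.mono Icc_subset_Ici_self
  have right : ∀ {g g' : ℝ → ℝ}, (∀ x ∈ Ici a, HasDerivWithinAt g (g' x) (Ici a) x) →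
      ∀ t ∈ Ico a x, HasDerivWithinAt g (g' t) (Ici t) t := fun hg t ht =>
    (hg t ht.1).mono (Ici_subset_Ici.2 ht.1)
  exact image_le_of_deriv_right_lt_deriv_boundary' (cont hf) (right hf) ha (cont hB) (right hB)
    (fun t ht => bound t ht.1) (right_mem_Icc.2 hx)

theorem not_forall_pos_of_rpow_le_deriv {y y' : ℝ → ℝ} {a c α : ℝ} (hc : 0 < c) (hα : 1 < α)
    (hy : ∀ s ∈ Ici a, HasDerivWithinAt y (y' s) (Ici a) s)
    (hgrowth : ∀ s ∈ Ici a, c * y s ^ α ≤ y' s) : ¬ ∀ s ∈ Ici a, 0 < y s := by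
  intro hpos
  set k := (α - 1) * c
  have hk : 0 < k := mul_pos (sub_pos.2 hα) hc
  have hdecay : ∀ s ∈ Ici a, y s ^ (1 - α) ≤ y a ^ (1 - α) - k * (s - a) := by
    intro s hs
    refine image_le_of_deriv_right_le_deriv_boundary (B' := fun _ => -k)
      (fun t ht => ((hy t ht.1).continuousWithinAt.mono Icc_subset_Ici_self).rpow_const
        (Or.inl (hpos t ht.1).ne'))
      (fun t ht => ((hy t ht.1).mono (Ici_subset_Ici.2 ht.1)).rpow_const
        (Or.inl (hpos t ht.1).ne'))
      (by simp) (by fun_prop)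
      (fun t _ => ((hasDerivAt_id t).sub_const a |>.const_mul k |>.const_sub _).hasDerivWithinAt
        |>.congr_deriv (by simp))
      (fun t ht => ?_) (right_mem_Icc.2 hs)
    have hyt := hpos t ht.1
    have hc_le : c ≤ y' t * y t ^ (1 - α - 1) := calc
      c = c * y t ^ α * y t ^ (1 - α - 1) := by
        rw [mul_assoc, ← rpow_add hyt]; norm_num
      _ ≤ y' t * y t ^ (1 - α - 1) :=
        mul_le_mul_of_nonneg_right (hgrowth t ht.1) (rpow_nonneg hyt.le _)
    nlinarith [mul_le_mul_of_nonneg_left hc_le (sub_nonneg.2 hα.le)]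
  have hS : a ≤ a + y a ^ (1 - α) / k :=
    le_add_of_nonneg_right (div_nonneg (rpow_pos_of_pos (hpos a self_mem_Ici) _).le hk.le)
  have hzero := hdecay _ hS
  rw [add_sub_cancel_left, mul_div_cancel₀ _ hk.ne', sub_self] at hzero
  exact (rpow_pos_of_pos (hpos _ hS) _).not_ge hzero

theorem barrier_slope_lt_forcing {lam c₇ c₈ α e u : ℝ} (hlam : 0 ≤ lam) (hc₇ : 0 < c₇)
    (hc₈ : 0 < c₈) (hα : 1 ≤ α) (he : 1 ≤ e) (hbig : c₈ * (1 + 2 * lam / c₇) + 1 ≤ c₈ ^ α)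
    (hu : 2 * c₈ * e ≤ u) : 2 * c₈ * lam * e < c₇ * (u ^ α - c₈ * e) := by
  have hpow : 2 * c₈ ^ α * e ≤ u ^ α := calc
    2 * c₈ ^ α * e ≤ 2 ^ α * c₈ ^ α * e ^ α := by
      gcongr
      · exact self_le_rpow_of_one_le one_le_two hα
      · exact self_le_rpow_of_one_le he hα
    _ = (2 * c₈ * e) ^ α := by
      rw [mul_rpow (by positivity) (by positivity), mul_rpow zero_le_two hc₈.le]
    _ ≤ u ^ α := rpow_le_rpow (by positivity) hu (by positivity)
  have hbig' : c₇ * c₈ + 2 * lam * c₈ + c₇ ≤ c₇ * c₈ ^ α := by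
    have h : c₇ * (c₈ * (1 + 2 * lam / c₇) + 1) = c₇ * c₈ + 2 * lam * c₈ + c₇ := by
      field_simp
    exact h ▸ mul_le_mul_of_nonneg_left hbig hc₇.le
  have he0 : 0 < e := one_pos.trans_le he
  have hslack : 0 < c₇ * c₈ * e + 2 * lam * c₈ * e + 2 * c₇ * e := by positivity
  linarith [mul_le_mul_of_nonneg_left hpow hc₇.le, mul_le_mul_of_nonneg_right hbig' he0.le]

theorem stmt_3_general (lam c₇ c₈ p : ℝ) (hlam : 0 < lam) (hc₇ : 0 < c₇) (hc₈ : 0 < c₈) (hp : 1 < p)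
    (y y' : ℝ → ℝ)
    (hdiff : ∀ s ∈ Set.Ici (0:ℝ), HasDerivWithinAt y (y' s) (Set.Ici 0) s)
    (hineq : ∀ s ∈ Set.Ici (0:ℝ),
      c₇ * (y s ^ ((p + 1) / 2) - c₈ * Real.exp (lam * s)) ≤ y' s)
    (hbig : c₈ * (1 + 2 * lam / c₇) + 1 ≤ c₈ ^ ((p + 1) / 2))
    (hone : 1 ≤ 2 * c₈) :
    ∀ s ∈ Set.Ici (0:ℝ), y s ≤ 2 * c₈ * Real.exp (lam * s) := by
  intro s hs
  by_contra! hlt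
  set α := (p + 1) / 2
  have hα : 1 < α := by simp only [α]; linarith
  have hs_le : ∀ t ∈ Ici s, (0:ℝ) ≤ t := fun t ht => le_trans hs ht
  have hexp : ∀ t ∈ Ici s, 1 ≤ exp (lam * t) := fun t ht =>
    one_le_exp (mul_nonneg hlam.le (hs_le t ht))
  have hy : ∀ t ∈ Ici s, HasDerivWithinAt y (y' t) (Ici s) t := fun t ht =>
    (hdiff t (hs_le t ht)).mono (Ici_subset_Ici.2 hs)
  have hb : ∀ t ∈ Ici s, HasDerivWithinAt (fun t => 2 * c₈ * exp (lam * t))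
      (2 * c₈ * lam * exp (lam * t)) (Ici s) t := fun t _ =>
    ((((hasDerivAt_id t).const_mul lam).exp).const_mul (2 * c₈)).hasDerivWithinAt.congr_deriv
      (by simp only [id, mul_one]; ring)
  have habove : ∀ t ∈ Ici s, 2 * c₈ * exp (lam * t) ≤ y t :=
    image_le_of_deriv_lt_deriv_boundary_Ici hb hy hlt.le fun t ht heq =>
      (barrier_slope_lt_forcing hlam.le hc₇ hc₈ hα.le (hexp t ht) hbig heq.le).trans_le
        (hineq t (hs_le t ht))
  have hy_one : ∀ t ∈ Ici s, 1 ≤ y t := fun t ht =>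
    hone.trans <| (le_mul_of_one_le_right (by positivity) (hexp t ht)).trans (habove t ht)
  refine not_forall_pos_of_rpow_le_deriv (half_pos hc₇) hα hy (fun t ht => ?_)
    (fun t ht => one_pos.trans_le (hy_one t ht))
  have hy_le := self_le_rpow_of_one_le (hy_one t ht) hα.le
  have hhalf : y t ^ α / 2 ≤ y t ^ α - c₈ * exp (lam * t) := by linarith [habove t ht]
  linarith [mul_le_mul_of_nonneg_left hhalf hc₇.le, hineq t (hs_le t ht)]

theorem stmt_3 (lam c₇ c₈ p : ℝ) (hlam : 0 < lam) (hc₇ : 0 < c₇) (hc₈ : 0 < c₈) (hp : 1 < p)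
    (y y' : ℝ → ℝ)
    (hdiff : ∀ s ∈ Set.Ici (0:ℝ), HasDerivWithinAt y (y' s) (Set.Ici 0) s)
    (hnn : ∀ s ∈ Set.Ici (0:ℝ), 0 ≤ y s)
    (hineq : ∀ s ∈ Set.Ici (0:ℝ),
      c₇ * (y s ^ ((p + 1) / 2) - c₈ * Real.exp (lam * s)) ≤ y' s)
    (hbig : c₈ * (1 + 2 * lam / c₇) + 1 ≤ c₈ ^ ((p + 1) / 2))
    (hone : 1 ≤ 2 * c₈) :
    ∀ s ∈ Set.Ici (0:ℝ), y s ≤ 2 * c₈ * Real.exp (lam * s) :=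
  stmt_3_general lam c₇ c₈ p hlam hc₇ hc₈ hp y y' hdiff hineq hbig hone
end

section
/- Let $\lambda_n > 0$ and let $z : [0, \infty) \to \mathbb{R}$ be differentiable with $z'(s) \leq \lambda_n z(s) + h(s)$ for all $s \geq 0$, where $h \geq 0$ and $N := \int_0^\infty e^{-\lambda_n s} h(s)\,ds < \infty$. Suppose moreover that there exists a differentiable function $y : [0,\infty) \to [0, \infty)$ with $y(s_1) > 0$ for some $s_1$, such that $y'(s) \geq -4 z(s) + C y(s)^{(p+1)/2}$ for all $s$ (with $C > 0$, $p > 1$). Then $z(s) \geq -N e^{\lambda_n s}$ for all $s \geq 0$. -/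
/-!
If `z(s₀) < -N e^{λ s₀}`, Gronwall applied to `e^{-λ s} z` keeps `z` negative from `s₀` on. Then
`y' ≥ -4 z + C y^q` makes `y` strictly increasing, hence positive after `s₀`, and
`y' ≥ C y^q` with `q = (p + 1) / 2 > 1` forces `y` to blow up in finite time, contradicting the
existence of `y` on all of `[0, ∞)`.
-/

open MeasureTheory Set Real

section DerivOnIci

variable {f f' : ℝ → ℝ} {a : ℝ}

lemma hasDerivWithinAt_Ici_of_le {b : ℝ} (hab : a ≤ b)
    (hf : ∀ x ∈ Ici a, HasDerivWithinAt f (f' x) (Ici a) x) :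
    ∀ x ∈ Ici b, HasDerivWithinAt f (f' x) (Ici b) x := fun x hx =>
  (hf x (hab.trans hx)).mono (Ici_subset_Ici.2 hab)

lemma hasDerivWithinAt_interior_Ici (hf : ∀ x ∈ Ici a, HasDerivWithinAt f (f' x) (Ici a) x) :
    ∀ x ∈ interior (Ici a), HasDerivWithinAt f (f' x) (interior (Ici a)) x := by
  rw [interior_Ici]
  exact fun x hx => (hf x (mem_Ici_of_Ioi hx)).mono Ioi_subset_Ici_self

lemma strictMonoOn_Ici_of_hasDerivWithinAt_pos
    (hf : ∀ x ∈ Ici a, HasDerivWithinAt f (f' x) (Ici a) x) (hf' : ∀ x ∈ Ioi a, 0 < f' x) :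
    StrictMonoOn f (Ici a) :=
  strictMonoOn_of_hasDerivWithinAt_pos (convex_Ici a) (fun x hx => (hf x hx).continuousWithinAt)
    (hasDerivWithinAt_interior_Ici hf) (by rwa [interior_Ici])

lemma antitoneOn_Ici_of_hasDerivWithinAt_nonpos
    (hf : ∀ x ∈ Ici a, HasDerivWithinAt f (f' x) (Ici a) x) (hf' : ∀ x ∈ Ioi a, f' x ≤ 0) :
    AntitoneOn f (Ici a) :=
  antitoneOn_of_hasDerivWithinAt_nonpos (convex_Ici a) (fun x hx => (hf x hx).continuousWithinAt)
    (hasDerivWithinAt_interior_Ici hf) (by rwa [interior_Ici])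

end DerivOnIci

theorem exp_neg_mul_mul_le_add_integral {z z' h : ℝ → ℝ} {c a s₀ s : ℝ}
    (hz : ∀ x ∈ Ici a, HasDerivWithinAt z (z' x) (Ici a) x)
    (hz' : ∀ x ∈ Ici a, z' x ≤ c * z x + h x) (hh : ∀ x ∈ Ici a, 0 ≤ h x)
    (hint : IntegrableOn (fun x => exp (-c * x) * h x) (Ioi a)) (ha : a ≤ s₀) (hs : s₀ ≤ s) :
    exp (-c * s) * z s ≤ exp (-c * s₀) * z s₀ + ∫ x in Ioi a, exp (-c * x) * h x := by
  have hsub : Icc s₀ s ⊆ Ici a := fun x hx => ha.trans hx.1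
  have hg : ∀ x ∈ Ici a, HasDerivWithinAt (fun x => exp (-c * x) * z x)
      (exp (-c * x) * (-c) * z x + exp (-c * x) * z' x) (Ici a) x := fun x hx => by
    have hexp : HasDerivAt (fun x => exp (-c * x)) (exp (-c * x) * (-c)) x := by
      simpa using ((hasDerivAt_id x).const_mul (-c)).exp
    exact hexp.hasDerivWithinAt.mul (hz x hx)
  have hmain : exp (-c * s) * z s - exp (-c * s₀) * z s₀ ≤ ∫ x in s₀..s, exp (-c * x) * h x := by
    refine intervalIntegral.sub_le_integral_of_hasDeriv_right_of_le hs
      (fun x hx => (hg x (hsub hx)).continuousWithinAt.mono hsub)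
      (fun x hx => (hg x (hsub (Ioo_subset_Icc_self hx))).mono
        fun t ht => ha.trans (hx.1.le.trans (le_of_lt ht)))
      ((integrableOn_Icc_iff_integrableOn_Ioc).2
        (hint.mono_set fun t ht => ha.trans_lt ht.1)) fun x hx => ?_
    have hx : x ∈ Ici a := hsub (Ioo_subset_Icc_self hx)
    have := mul_le_mul_of_nonneg_left (hz' x hx) (exp_pos (-c * x)).le
    linarith
  have htail : ∫ x in s₀..s, exp (-c * x) * h x ≤ ∫ x in Ioi a, exp (-c * x) * h x := by
    rw [intervalIntegral.integral_of_le hs]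
    refine setIntegral_mono_set hint ?_ (Filter.Eventually.of_forall fun t ht => ha.trans_lt ht.1)
    filter_upwards [ae_restrict_mem measurableSet_Ioi] with x hx
    exact mul_nonneg (exp_pos _).le (hh x (mem_Ici_of_Ioi hx))
  linarith

/-- The function `y^{1-q} + (q - 1) C s` is nonincreasing and `y^{1-q} > 0`. -/
theorem mul_sub_lt_rpow_of_mul_rpow_le_deriv {y y' : ℝ → ℝ} {a C q s : ℝ} (hq : 1 < q)
    (hy : ∀ x ∈ Ici a, HasDerivWithinAt y (y' x) (Ici a) x) (hy_pos : ∀ x ∈ Ici a, 0 < y x)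
    (hy' : ∀ x ∈ Ici a, C * y x ^ q ≤ y' x) (hs : a ≤ s) :
    (q - 1) * C * (s - a) < y a ^ (1 - q) := by
  have hu : ∀ x ∈ Ici a, HasDerivWithinAt (fun x => y x ^ (1 - q) + (q - 1) * C * x)
      (y' x * (1 - q) * y x ^ (1 - q - 1) + (q - 1) * C) (Ici a) x := fun x hx => by
    have hlin : HasDerivAt (fun x => (q - 1) * C * x) ((q - 1) * C) x := by
      simpa using (hasDerivAt_id x).const_mul ((q - 1) * C)
    exact ((hy x hx).rpow_const (Or.inl (hy_pos x hx).ne')).add hlin.hasDerivWithinAt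
  have hu' : ∀ x ∈ Ioi a, y' x * (1 - q) * y x ^ (1 - q - 1) + (q - 1) * C ≤ 0 := fun x hx => by
    have hx : x ∈ Ici a := mem_Ici_of_Ioi hx
    have hpow : y x ^ (1 - q - 1) * y x ^ q = 1 := by
      rw [← rpow_add (hy_pos x hx)]; norm_num
    have hC : C ≤ y' x * y x ^ (1 - q - 1) := by
      have := mul_le_mul_of_nonneg_right (hy' x hx) (rpow_pos_of_pos (hy_pos x hx) (1 - q - 1)).le
      rwa [mul_assoc, mul_comm (y x ^ q), hpow, mul_one] at this
    nlinarith
  have hanti : y s ^ (1 - q) + (q - 1) * C * s ≤ y a ^ (1 - q) + (q - 1) * C * a :=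
    antitoneOn_Ici_of_hasDerivWithinAt_nonpos hu hu' self_mem_Ici hs hs
  linarith [rpow_pos_of_pos (hy_pos s hs) (1 - q)]

theorem stmt_4_general (lamn C p : ℝ) (hC : 0 < C) (hp : 1 < p)
    (z z' h : ℝ → ℝ)
    (hzd : ∀ s ∈ Set.Ici (0:ℝ), HasDerivWithinAt z (z' s) (Set.Ici 0) s)
    (hz' : ∀ s ∈ Set.Ici (0:ℝ), z' s ≤ lamn * z s + h s)
    (hh : ∀ s ∈ Set.Ici (0:ℝ), 0 ≤ h s)
    (hint : IntegrableOn (fun s => Real.exp (-lamn * s) * h s) (Set.Ioi 0))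
    (y y' : ℝ → ℝ)
    (hyd : ∀ s ∈ Set.Ici (0:ℝ), HasDerivWithinAt y (y' s) (Set.Ici 0) s)
    (hynn : ∀ s ∈ Set.Ici (0:ℝ), 0 ≤ y s)
    (hy' : ∀ s ∈ Set.Ici (0:ℝ), -4 * z s + C * y s ^ ((p + 1) / 2) ≤ y' s) :
    ∀ s ∈ Set.Ici (0:ℝ),
      -(∫ τ in Set.Ioi (0:ℝ), Real.exp (-lamn * τ) * h τ) * Real.exp (lamn * s) ≤ z s := by
  by_contra! ⟨s₀, hs₀ : 0 ≤ s₀, hzs₀⟩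
  have hg₀ : exp (-lamn * s₀) * z s₀ + ∫ τ in Ioi 0, exp (-lamn * τ) * h τ < 0 := by
    have := mul_lt_mul_of_pos_left hzs₀ (exp_pos (-lamn * s₀))
    rw [mul_left_comm, ← exp_add, show -lamn * s₀ + lamn * s₀ = 0 by ring, exp_zero,
      mul_one] at this
    linarith
  have hz_neg : ∀ s ∈ Ici s₀, z s < 0 := fun s hs =>
    neg_of_mul_neg_right ((exp_neg_mul_mul_le_add_integral hzd hz' hh hint hs₀ hs).trans_lt hg₀)
      (exp_pos _).le
  have hq : 1 < (p + 1) / 2 := by linarith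
  set q := (p + 1) / 2
  have hy_rate : ∀ s ∈ Ici s₀, C * y s ^ q ≤ y' s := fun s hs => by
    linarith [hz_neg s hs, hy' s (hs₀.trans hs)]
  have hy_mono : StrictMonoOn y (Ici s₀) :=
    strictMonoOn_Ici_of_hasDerivWithinAt_pos (hasDerivWithinAt_Ici_of_le hs₀ hyd) fun s hs => by
      have hs : s ∈ Ici s₀ := mem_Ici_of_Ioi hs
      have := mul_nonneg hC.le (rpow_nonneg (hynn s (hs₀.trans hs)) q)
      linarith [hz_neg s hs, hy' s (hs₀.trans hs)]
  have hy_pos : ∀ s ∈ Ici (s₀ + 1), 0 < y s := fun s (hs : s₀ + 1 ≤ s) =>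
    (hynn s₀ hs₀).trans_lt (hy_mono self_mem_Ici (mem_Ici.2 (by linarith)) (by linarith))
  have hqC : 0 < (q - 1) * C := mul_pos (sub_pos.2 hq) hC
  have hlife := mul_sub_lt_rpow_of_mul_rpow_le_deriv hq
    (hasDerivWithinAt_Ici_of_le (by linarith) hyd) hy_pos
    (fun s hs => hy_rate s (Ici_subset_Ici.2 (by linarith) hs))
    (s := s₀ + 1 + y (s₀ + 1) ^ (1 - q) / ((q - 1) * C))
    (le_add_of_nonneg_right (div_nonneg (rpow_pos_of_pos (hy_pos _ self_mem_Ici) _).le hqC.le))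
  rw [add_sub_cancel_left, mul_div_cancel₀ _ hqC.ne'] at hlife
  exact lt_irrefl _ hlife

theorem stmt_4 (lamn C p s₁ : ℝ) (hlam : 0 < lamn) (hC : 0 < C) (hp : 1 < p) (hs₁ : 0 ≤ s₁)
    (z z' h : ℝ → ℝ)
    (hzd : ∀ s ∈ Set.Ici (0:ℝ), HasDerivWithinAt z (z' s) (Set.Ici 0) s)
    (hz' : ∀ s ∈ Set.Ici (0:ℝ), z' s ≤ lamn * z s + h s)
    (hh : ∀ s ∈ Set.Ici (0:ℝ), 0 ≤ h s)
    (hint : IntegrableOn (fun s => Real.exp (-lamn * s) * h s) (Set.Ioi 0))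
    (y y' : ℝ → ℝ)
    (hyd : ∀ s ∈ Set.Ici (0:ℝ), HasDerivWithinAt y (y' s) (Set.Ici 0) s)
    (hynn : ∀ s ∈ Set.Ici (0:ℝ), 0 ≤ y s)
    (hy₁ : 0 < y s₁)
    (hy' : ∀ s ∈ Set.Ici (0:ℝ), -4 * z s + C * y s ^ ((p + 1) / 2) ≤ y' s) :
    ∀ s ∈ Set.Ici (0:ℝ),
      -(∫ τ in Set.Ioi (0:ℝ), Real.exp (-lamn * τ) * h τ) * Real.exp (lamn * s) ≤ z s :=
  stmt_4_general lamn C p hC hp z z' h hzd hz' hh hint y y' hyd hynn hy'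
end
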